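/- arXiv:2006.02888 — 4 statements merged into one kernel-verified Lean document; each statement's English description precedes it below -/
import Mathlib

section
/- (Proposition 2.1, outgoing case, fixed-mode form.) Fix M > 0 and let r : ℝ → ℝ be smooth with r(x) > 2M and r'(x) = 1 − 2M/r(x) for all x; set F(x) = 1 − 2M/r(x) and fix λ ∈ ℝ. Suppose β : ℝ² → ℝ is smooth and satisfies the spin +1 Teukolsky fixed-mode equation L L̄ β + (2/r)(1 − 3M/r)·L̄ β + (λ + 1)(F/r²)·β = 0 on ℝ², where Lψ = ∂_tψ + ∂_xψ and L̄ψ = ∂_tψ − ∂_xψ. Then the function φ := (r²/F)·L̄ β satisfies the Fackerell–Ipser fixed-mode equation L L̄ φ + (λ + 1)(F/r²)·φ = 0 on ℝ². -/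
set_option maxHeartbeats 1000000

private lemma hasDerivAt_slice_fst {ψ : ℝ × ℝ → ℝ} {p : ℝ × ℝ}
    (h : DifferentiableAt ℝ ψ p) :
    HasDerivAt (fun t => ψ (t, p.2)) (fderiv ℝ ψ p (1, 0)) p.1 := by
  have hg : HasDerivAt (fun t : ℝ => (t, p.2)) ((1 : ℝ), (0 : ℝ)) p.1 :=
    (hasDerivAt_id p.1).prodMk (hasDerivAt_const _ _)
  have := h.hasFDerivAt.comp_hasDerivAt p.1 (by simpa using hg)
  exact this

private lemma hasDerivAt_slice_snd {ψ : ℝ × ℝ → ℝ} {p : ℝ × ℝ}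
    (h : DifferentiableAt ℝ ψ p) :
    HasDerivAt (fun x => ψ (p.1, x)) (fderiv ℝ ψ p (0, 1)) p.2 := by
  have hg : HasDerivAt (fun x : ℝ => (p.1, x)) ((0 : ℝ), (1 : ℝ)) p.2 :=
    (hasDerivAt_const _ _).prodMk (hasDerivAt_id p.2)
  have := h.hasFDerivAt.comp_hasDerivAt p.2 (by simpa using hg)
  exact this

private lemma contDiff_dirDeriv {χ : ℝ × ℝ → ℝ} (hχ : ContDiff ℝ (⊤ : ℕ∞) χ) (v : ℝ × ℝ) :
    ContDiff ℝ (⊤ : ℕ∞) fun p => fderiv ℝ χ p v :=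
  (hχ.fderiv_right (by simp)).clm_apply contDiff_const

private lemma dirDeriv_comm {χ : ℝ × ℝ → ℝ} (hχ : ContDiff ℝ (⊤ : ℕ∞) χ) (p v w : ℝ × ℝ) :
    fderiv ℝ (fun q => fderiv ℝ χ q w) p v = fderiv ℝ (fun q => fderiv ℝ χ q v) p w := by
  have hdf : ∀ q, HasFDerivAt χ (fderiv ℝ χ q) q := fun q =>
    (hχ.differentiable (by simp) q).hasFDerivAt
  have h2 : HasFDerivAt (fderiv ℝ χ) (fderiv ℝ (fderiv ℝ χ) p) p :=
    (((hχ.fderiv_right (m := (⊤ : ℕ∞)) (by simp)).differentiable (by simp)) p).hasFDerivAt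
  have hsym := second_derivative_symmetric hdf h2
  have e1 : fderiv ℝ (fun q => fderiv ℝ χ q w) p =
      (ContinuousLinearMap.apply ℝ ℝ w).comp (fderiv ℝ (fderiv ℝ χ) p) :=
    (((ContinuousLinearMap.apply ℝ ℝ w).hasFDerivAt).comp p h2).fderiv
  have e2 : fderiv ℝ (fun q => fderiv ℝ χ q v) p =
      (ContinuousLinearMap.apply ℝ ℝ v).comp (fderiv ℝ (fderiv ℝ χ) p) :=
    (((ContinuousLinearMap.apply ℝ ℝ v).hasFDerivAt).comp p h2).fderiv
  rw [e1, e2]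
  simpa using hsym v w

private lemma fderiv_mul_slice {g g' : ℝ → ℝ} {ψ : ℝ × ℝ → ℝ} (p v : ℝ × ℝ)
    (hg : HasDerivAt g (g' p.2) p.2) (h1 : DifferentiableAt ℝ ψ p) :
    fderiv ℝ (fun q => g q.2 * ψ q) p v = g' p.2 * v.2 * ψ p + g p.2 * fderiv ℝ ψ p v := by
  have hG : HasFDerivAt (fun q : ℝ × ℝ => g q.2)
      ((g' p.2) • (ContinuousLinearMap.snd ℝ ℝ ℝ)) p :=
    hg.comp_hasFDerivAt p hasFDerivAt_snd
  rw [(hG.fun_mul h1.hasFDerivAt).fderiv]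
  simp only [ContinuousLinearMap.add_apply, ContinuousLinearMap.smul_apply,
    ContinuousLinearMap.coe_snd', smul_eq_mul]
  ring

private lemma fderiv_comb {g1 g1' g2 g2' : ℝ → ℝ} {ψ1 ψ2 : ℝ × ℝ → ℝ} (p v : ℝ × ℝ)
    (hg1 : HasDerivAt g1 (g1' p.2) p.2) (hg2 : HasDerivAt g2 (g2' p.2) p.2)
    (h1 : DifferentiableAt ℝ ψ1 p) (h2 : DifferentiableAt ℝ ψ2 p) :
    fderiv ℝ (fun q => g1 q.2 * ψ1 q + g2 q.2 * ψ2 q) p v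
      = (g1' p.2 * v.2 * ψ1 p + g1 p.2 * fderiv ℝ ψ1 p v)
        + (g2' p.2 * v.2 * ψ2 p + g2 p.2 * fderiv ℝ ψ2 p v) := by
  have hG1 : HasFDerivAt (fun q : ℝ × ℝ => g1 q.2)
      ((g1' p.2) • (ContinuousLinearMap.snd ℝ ℝ ℝ)) p :=
    hg1.comp_hasFDerivAt p hasFDerivAt_snd
  have hG2 : HasFDerivAt (fun q : ℝ × ℝ => g2 q.2)
      ((g2' p.2) • (ContinuousLinearMap.snd ℝ ℝ ℝ)) p :=
    hg2.comp_hasFDerivAt p hasFDerivAt_snd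
  rw [((hG1.fun_mul h1.hasFDerivAt).fun_add (hG2.fun_mul h2.hasFDerivAt)).fderiv]
  simp only [ContinuousLinearMap.add_apply, ContinuousLinearMap.smul_apply,
    ContinuousLinearMap.coe_snd', smul_eq_mul]
  ring

/-- Proposition 2.1, outgoing case, fixed-mode form: if `β` satisfies the
spin +1 Teukolsky fixed-mode equation
`L L̄ β + (2/r)(1 − 3M/r) L̄ β + (λ+1)(F/r²) β = 0` on `ℝ²`, then `φ := (r²/F)·L̄ β`
satisfies the Fackerell–Ipser fixed-mode equation `L L̄ φ + (λ+1)(F/r²) φ = 0` on `ℝ²`. -/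
theorem teukolsky_implies_fackerell_ipser_outgoing (M lam : ℝ) (hM : 0 < M)
    (r : ℝ → ℝ) (hr_smooth : ContDiff ℝ (⊤ : ℕ∞) r) (hr_gt : ∀ x : ℝ, 2 * M < r x)
    (hr' : ∀ x : ℝ, HasDerivAt r (1 - 2 * M / r x) x)
    (F : ℝ → ℝ) (hF : ∀ x : ℝ, F x = 1 - 2 * M / r x)
    (Lop Lbar : (ℝ × ℝ → ℝ) → (ℝ × ℝ → ℝ))
    (hLop : ∀ (ψ : ℝ × ℝ → ℝ) (p : ℝ × ℝ),
      Lop ψ p = deriv (fun t => ψ (t, p.2)) p.1 + deriv (fun x => ψ (p.1, x)) p.2)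
    (hLbar : ∀ (ψ : ℝ × ℝ → ℝ) (p : ℝ × ℝ),
      Lbar ψ p = deriv (fun t => ψ (t, p.2)) p.1 - deriv (fun x => ψ (p.1, x)) p.2)
    (β : ℝ × ℝ → ℝ) (hβ : ContDiff ℝ (⊤ : ℕ∞) β)
    (hTeuk : ∀ p : ℝ × ℝ,
      Lop (Lbar β) p + (2 / r p.2) * (1 - 3 * M / r p.2) * Lbar β p
        + (lam + 1) * (F p.2 / (r p.2) ^ 2) * β p = 0)
    (φ : ℝ × ℝ → ℝ) (hφ : ∀ p : ℝ × ℝ, φ p = (r p.2) ^ 2 / F p.2 * Lbar β p) :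
    ∀ p : ℝ × ℝ,
      Lop (Lbar φ) p + (lam + 1) * (F p.2 / (r p.2) ^ 2) * φ p = 0 := by
  have hu0 : ∀ x, r x ≠ 0 := fun x => by nlinarith [hr_gt x]
  have hu2 : ∀ x, r x - 2*M ≠ 0 := fun x => by nlinarith [hr_gt x]
  have hLbarEq : ∀ (ψ : ℝ × ℝ → ℝ), ContDiff ℝ (⊤ : ℕ∞) ψ → ∀ q : ℝ × ℝ,
      Lbar ψ q = fderiv ℝ ψ q ((1:ℝ), (-1:ℝ)) := by
    intro ψ hψ q
    have hd := hψ.differentiable (by simp) q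
    rw [hLbar, (hasDerivAt_slice_fst hd).deriv, (hasDerivAt_slice_snd hd).deriv, ← map_sub]
    congr 1
    simp [Prod.ext_iff]
  have hLopEq : ∀ (ψ : ℝ × ℝ → ℝ), ContDiff ℝ (⊤ : ℕ∞) ψ → ∀ q : ℝ × ℝ,
      Lop ψ q = fderiv ℝ ψ q ((1:ℝ), (1:ℝ)) := by
    intro ψ hψ q
    have hd := hψ.differentiable (by simp) q
    rw [hLop, (hasDerivAt_slice_fst hd).deriv, (hasDerivAt_slice_snd hd).deriv, ← map_add]
    congr 1
    simp [Prod.ext_iff]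
  have hWd : ∀ x, HasDerivAt (fun y => r y ^ 3 / (r y - 2*M))
      (r x * (2 * r x - 6*M) / (r x - 2*M)) x := by
    intro x
    have h1 : HasDerivAt (fun y => r y ^ 3) (3 * r x ^ 2 * (1 - 2*M/r x)) x := by
      simpa using (hr' x).fun_pow 3
    have h2 : HasDerivAt (fun y => r y - 2*M) (1 - 2*M/r x) x := (hr' x).sub_const _
    have h := h1.fun_div h2 (hu2 x)
    refine h.congr_deriv ?_
    field_simp [hu0 x, hu2 x]
    ring
  have hW1d : ∀ x, HasDerivAt (fun y => -(r y * (2 * r y - 6*M) / (r y - 2*M)))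
      (-((2*(r x)^2 - 8*M*r x + 12*M^2)/(r x * (r x - 2*M)))) x := by
    intro x
    have h1 : HasDerivAt (fun y => r y * (2 * r y - 6*M))
        ((1 - 2*M/r x) * (2 * r x - 6*M) + r x * (2 * (1 - 2*M/r x))) x :=
      (hr' x).mul (((hr' x).const_mul 2).sub_const _)
    have h2 : HasDerivAt (fun y => r y - 2*M) (1 - 2*M/r x) x := (hr' x).sub_const _
    have h := (h1.fun_div h2 (hu2 x)).fun_neg
    refine h.congr_deriv ?_
    field_simp [hu0 x, hu2 x]
    ring
  have ha0d : ∀ x, HasDerivAt (fun y => -((2 * r y - 6*M) / (r y)^2))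
      ((2*r x - 12*M)*(r x - 2*M)/(r x)^4) x := by
    intro x
    have h1 : HasDerivAt (fun y => 2 * r y - 6*M) (2 * (1 - 2*M/r x)) x :=
      ((hr' x).const_mul 2).sub_const _
    have h2 : HasDerivAt (fun y => (r y)^2) (2 * r x * (1 - 2*M/r x)) x := by
      simpa using (hr' x).fun_pow 2
    have h := (h1.fun_div h2 (pow_ne_zero 2 (hu0 x))).fun_neg
    refine h.congr_deriv ?_
    field_simp [hu0 x, hu2 x]
    ring
  have hb0d : ∀ x, HasDerivAt (fun y => -((lam+1) * (r y - 2*M) / (r y)^3))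
      ((lam+1)*(2*r x - 6*M)*(r x - 2*M)/(r x)^5) x := by
    intro x
    have h1 : HasDerivAt (fun y => (lam+1) * (r y - 2*M)) ((lam+1) * (1 - 2*M/r x)) x :=
      ((hr' x).sub_const _).const_mul _
    have h2 : HasDerivAt (fun y => (r y)^3) (3 * (r x)^2 * (1 - 2*M/r x)) x := by
      simpa using (hr' x).fun_pow 3
    have h := (h1.fun_div h2 (pow_ne_zero 3 (hu0 x))).fun_neg
    refine h.congr_deriv ?_
    field_simp [hu0 x, hu2 x]
    ring
  have hχ : ContDiff ℝ (⊤ : ℕ∞) (fun q : ℝ × ℝ => fderiv ℝ β q ((1:ℝ), (-1:ℝ))) :=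
    contDiff_dirDeriv hβ _
  have hχfunEq : Lbar β = fun q : ℝ × ℝ => fderiv ℝ β q ((1:ℝ), (-1:ℝ)) :=
    funext (hLbarEq β hβ)
  have hφfun : φ = fun q : ℝ × ℝ =>
      r q.2 ^ 3 / (r q.2 - 2*M) * fderiv ℝ β q ((1:ℝ), (-1:ℝ)) := by
    funext q
    rw [hφ q, hLbarEq β hβ q, hF]
    have key : r q.2 ^ 2 / (1 - 2*M/r q.2) = r q.2 ^ 3 / (r q.2 - 2*M) := by
      rw [div_eq_div_iff _ (hu2 q.2)]
      · field_simp [hu0 q.2]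
        try ring
      · have : (1:ℝ) - 2*M/r q.2 = (r q.2 - 2*M)/r q.2 := by
          field_simp [hu0 q.2]
        rw [this]
        exact div_ne_zero (hu2 q.2) (hu0 q.2)
    rw [key]
  have hWsm : ContDiff ℝ (⊤ : ℕ∞) (fun y => r y ^ 3 / (r y - 2*M)) :=
    (hr_smooth.pow 3).div (hr_smooth.sub contDiff_const) hu2
  have hφsm : ContDiff ℝ (⊤ : ℕ∞) φ := by
    rw [hφfun]; exact (hWsm.comp contDiff_snd).mul hχ
  have hLbφ : Lbar φ = fun q : ℝ × ℝ =>
      r q.2 ^ 3 / (r q.2 - 2*M) *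
        fderiv ℝ (fun q' : ℝ × ℝ => fderiv ℝ β q' ((1:ℝ), (-1:ℝ))) q ((1:ℝ), (-1:ℝ))
      + (-(r q.2 * (2 * r q.2 - 6*M) / (r q.2 - 2*M))) * fderiv ℝ β q ((1:ℝ), (-1:ℝ)) := by
    funext q
    rw [hLbarEq φ hφsm q, hφfun]
    have e := fderiv_mul_slice (g := fun x => r x ^ 3 / (r x - 2*M))
      (g' := fun x => r x * (2 * r x - 6*M) / (r x - 2*M))
      (ψ := fun q' : ℝ × ℝ => fderiv ℝ β q' ((1:ℝ), (-1:ℝ)))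
      q ((1:ℝ), (-1:ℝ)) (hWd q.2) (hχ.differentiable (by simp) q)
    simp only [] at e
    rw [e]
    norm_num
    ring
  have hLbφsm : ContDiff ℝ (⊤ : ℕ∞) (Lbar φ) := by
    rw [hLbφ]
    exact ((hWsm.comp contDiff_snd).mul (contDiff_dirDeriv hχ _)).add
      ((((hr_smooth.mul ((contDiff_const.mul hr_smooth).sub contDiff_const)).div
        (hr_smooth.sub contDiff_const) hu2).neg.comp contDiff_snd).mul hχ)
  have hDvχ : (fun q : ℝ × ℝ =>
        fderiv ℝ (fun q' : ℝ × ℝ => fderiv ℝ β q' ((1:ℝ), (-1:ℝ))) q ((1:ℝ), (1:ℝ)))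
      = fun q : ℝ × ℝ =>
        (-((2 * r q.2 - 6*M) / (r q.2)^2)) * fderiv ℝ β q ((1:ℝ), (-1:ℝ))
        + (-((lam+1) * (r q.2 - 2*M) / (r q.2)^3)) * β q := by
    funext q
    have h := hTeuk q
    rw [hχfunEq, hLopEq _ hχ q, hF] at h
    have h1 : fderiv ℝ (fun q' : ℝ × ℝ => fderiv ℝ β q' ((1:ℝ), (-1:ℝ))) q ((1:ℝ), (1:ℝ))
        = -((2 / r q.2) * (1 - 3 * M / r q.2) * fderiv ℝ β q ((1:ℝ), (-1:ℝ)))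
          - (lam + 1) * ((1 - 2 * M / r q.2) / (r q.2) ^ 2) * β q := by linarith
    rw [h1]
    field_simp [hu0 q.2, hu2 q.2]
    ring
  intro p
  rw [hLopEq (Lbar φ) hLbφsm p, hLbφ]
  have e1 := fderiv_comb
      (g1 := fun x => r x ^ 3 / (r x - 2*M))
      (g1' := fun x => r x * (2 * r x - 6*M) / (r x - 2*M))
      (g2 := fun x => -(r x * (2 * r x - 6*M) / (r x - 2*M)))
      (g2' := fun x => -((2*(r x)^2 - 8*M*r x + 12*M^2)/(r x * (r x - 2*M))))
      (ψ1 := fun q : ℝ × ℝ =>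
        fderiv ℝ (fun q' : ℝ × ℝ => fderiv ℝ β q' ((1:ℝ), (-1:ℝ))) q ((1:ℝ), (-1:ℝ)))
      (ψ2 := fun q : ℝ × ℝ => fderiv ℝ β q ((1:ℝ), (-1:ℝ)))
      p ((1:ℝ), (1:ℝ)) (hWd p.2) (hW1d p.2)
      ((contDiff_dirDeriv hχ _).differentiable (by simp) p) (hχ.differentiable (by simp) p)
  simp only [] at e1
  rw [e1]
  rw [dirDeriv_comm hχ p ((1:ℝ), (1:ℝ)) ((1:ℝ), (-1:ℝ)), hDvχ]
  have e2 := fderiv_comb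
      (g1 := fun x => -((2 * r x - 6*M) / (r x)^2))
      (g1' := fun x => (2*r x - 12*M)*(r x - 2*M)/(r x)^4)
      (g2 := fun x => -((lam+1) * (r x - 2*M) / (r x)^3))
      (g2' := fun x => (lam+1)*(2*r x - 6*M)*(r x - 2*M)/(r x)^5)
      (ψ1 := fun q : ℝ × ℝ => fderiv ℝ β q ((1:ℝ), (-1:ℝ)))
      (ψ2 := β)
      p ((1:ℝ), (-1:ℝ)) (ha0d p.2) (hb0d p.2)
      (hχ.differentiable (by simp) p) (hβ.differentiable (by simp) p)
  simp only [] at e2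
  rw [e2]
  have hDvχp := congrFun hDvχ p
  rw [hDvχp]
  have hlast : (lam + 1) * (F p.2 / (r p.2) ^ 2) * φ p
      = (lam + 1) * fderiv ℝ β p ((1:ℝ), (-1:ℝ)) := by
    simp only [hφfun, hF]
    field_simp [hu0 p.2, hu2 p.2]
  rw [hlast]
  have hu0' := hu0 p.2
  have hu2' := hu2 p.2
  set A := fderiv ℝ (fun q' : ℝ × ℝ => fderiv ℝ β q' ((1:ℝ), (-1:ℝ))) p ((1:ℝ), (-1:ℝ)) with hA
  set B := fderiv ℝ β p ((1:ℝ), (-1:ℝ)) with hB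
  set C := β p with hC
  field_simp
  ring
end

section
/- (Proposition 2.1, incoming case, fixed-mode form.) Fix M > 0 and let r : ℝ → ℝ be smooth with r(x) > 2M and r'(x) = 1 − 2M/r(x) for all x; set F(x) = 1 − 2M/r(x) and fix λ ∈ ℝ. Suppose β : ℝ² → ℝ is smooth and satisfies the incoming Teukolsky fixed-mode equation in divergence form, L̄( (r²/F)·L β ) + (λ + 1)·β = 0 on ℝ², where Lψ = ∂_tψ + ∂_xψ and L̄ψ = ∂_tψ − ∂_xψ. Then the function φ := (r²/F)·L β satisfies the Fackerell–Ipser fixed-mode equation L L̄ φ + (λ + 1)(F/r²)·φ = 0 on ℝ². -/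
/-- Proposition 2.1, incoming case, fixed-mode form: if `β` satisfies the
incoming Teukolsky fixed-mode equation in divergence form
`L̄((r²/F)·L β) + (λ+1) β = 0` on `ℝ²`, then `φ := (r²/F)·L β` satisfies the
Fackerell–Ipser fixed-mode equation `L L̄ φ + (λ+1)(F/r²) φ = 0` on `ℝ²`. -/
theorem teukolsky_implies_fackerell_ipser_incoming (M lam : ℝ) (hM : 0 < M)
    (r : ℝ → ℝ) (hr_smooth : ContDiff ℝ (⊤ : ℕ∞) r) (hr_gt : ∀ x : ℝ, 2 * M < r x)
    (hr' : ∀ x : ℝ, HasDerivAt r (1 - 2 * M / r x) x)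
    (F : ℝ → ℝ) (hF : ∀ x : ℝ, F x = 1 - 2 * M / r x)
    (Lop Lbar : (ℝ × ℝ → ℝ) → (ℝ × ℝ → ℝ))
    (hLop : ∀ (ψ : ℝ × ℝ → ℝ) (p : ℝ × ℝ),
      Lop ψ p = deriv (fun t => ψ (t, p.2)) p.1 + deriv (fun x => ψ (p.1, x)) p.2)
    (hLbar : ∀ (ψ : ℝ × ℝ → ℝ) (p : ℝ × ℝ),
      Lbar ψ p = deriv (fun t => ψ (t, p.2)) p.1 - deriv (fun x => ψ (p.1, x)) p.2)
    (β : ℝ × ℝ → ℝ) (hβ : ContDiff ℝ (⊤ : ℕ∞) β)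
    (hTeuk : ∀ p : ℝ × ℝ,
      Lbar (fun q => (r q.2) ^ 2 / F q.2 * Lop β q) p + (lam + 1) * β p = 0)
    (φ : ℝ × ℝ → ℝ) (hφ : ∀ p : ℝ × ℝ, φ p = (r p.2) ^ 2 / F p.2 * Lop β p) :
    ∀ p : ℝ × ℝ,
      Lop (Lbar φ) p + (lam + 1) * (F p.2 / (r p.2) ^ 2) * φ p = 0 := by
  intro p
  -- positivity facts
  have hrpos : ∀ x, 0 < r x := fun x => lt_trans (by linarith) (hr_gt x)
  have hFpos : ∀ x, 0 < F x := by
    intro x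
    rw [hF x]
    have h1 : 2 * M / r x < 1 := (div_lt_one (hrpos x)).2 (hr_gt x)
    linarith
  -- φ equals the Teukolsky flux as a function
  have hφeq : φ = fun q => (r q.2) ^ 2 / F q.2 * Lop β q := funext hφ
  -- L̄ φ = -(λ+1) β as functions
  have hLbarφ : Lbar φ = fun q => -(lam + 1) * β q := by
    funext q
    have := hTeuk q
    rw [hφeq]
    linarith
  -- differentiability of the slices of β
  have hβt : DifferentiableAt ℝ (fun t => β (t, p.2)) p.1 := by
    have : ContDiff ℝ (⊤ : ℕ∞) (fun t : ℝ => β (t, p.2)) :=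
      hβ.comp (contDiff_id.prodMk contDiff_const)
    exact (this.differentiable (by simp)).differentiableAt
  have hβx : DifferentiableAt ℝ (fun x => β (p.1, x)) p.2 := by
    have : ContDiff ℝ (⊤ : ℕ∞) (fun x : ℝ => β (p.1, x)) :=
      hβ.comp (contDiff_const.prodMk contDiff_id)
    exact (this.differentiable (by simp)).differentiableAt
  -- compute L (L̄ φ)
  have hLLbar : Lop (Lbar φ) p = -(lam + 1) * Lop β p := by
    rw [hLbarφ, hLop, hLop]
    rw [deriv_const_mul _ hβt, deriv_const_mul _ hβx]
    ring
  -- relate Lop β to φ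
  have hne : (r p.2) ^ 2 / F p.2 ≠ 0 :=
    div_ne_zero (pow_ne_zero _ (hrpos p.2).ne') (hFpos p.2).ne'
  have hLβ : Lop β p = F p.2 / (r p.2) ^ 2 * φ p := by
    rw [hφ p]
    field_simp [(hrpos p.2).ne', (hFpos p.2).ne']
  rw [hLLbar, hLβ]
  ring
end

section
/- (Conservation law in double-null coordinates, fixed-mode form of equation (3.2).) Let w₀ : ℝ → ℝ be C¹ and define w(u,v) = w₀((v − u)/2) on ℝ². Suppose ψ : ℝ² → ℝ is C² in the coordinates (u,v) and satisfies ∂_u∂_v ψ + w·ψ = 0 on ℝ². Then the identity ∂_u[ (∂_v ψ)² + w·ψ² ] + ∂_v[ (∂_u ψ)² + w·ψ² ] = 0 holds at every point of ℝ². -/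
/-- conservation law in double-null coordinates, fixed-mode form of (3.2):
if `∂_u∂_v ψ + w ψ = 0` with `w(u,v) = w₀((v−u)/2)`, then
`∂_u[(∂_v ψ)² + w ψ²] + ∂_v[(∂_u ψ)² + w ψ²] = 0` everywhere. -/
theorem conservation_law_double_null (w₀ : ℝ → ℝ) (hw₀ : ContDiff ℝ 1 w₀)
    (w : ℝ × ℝ → ℝ) (hw : ∀ p : ℝ × ℝ, w p = w₀ ((p.2 - p.1) / 2))
    (ψ : ℝ × ℝ → ℝ) (hψ : ContDiff ℝ 2 ψ)
    (Pu Pv : (ℝ × ℝ → ℝ) → (ℝ × ℝ → ℝ))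
    (hPu : ∀ (f : ℝ × ℝ → ℝ) (p : ℝ × ℝ), Pu f p = deriv (fun u => f (u, p.2)) p.1)
    (hPv : ∀ (f : ℝ × ℝ → ℝ) (p : ℝ × ℝ), Pv f p = deriv (fun v => f (p.1, v)) p.2)
    (heq : ∀ p : ℝ × ℝ, Pu (Pv ψ) p + w p * ψ p = 0) :
    ∀ p : ℝ × ℝ,
      Pu (fun q => (Pv ψ q) ^ 2 + w q * (ψ q) ^ 2) p
        + Pv (fun q => (Pu ψ q) ^ 2 + w q * (ψ q) ^ 2) p = 0 := by
  -- basic differentiability facts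
  have hψd : Differentiable ℝ ψ := hψ.differentiable (by norm_num)
  set f' : ℝ × ℝ → (ℝ × ℝ) →L[ℝ] ℝ := fderiv ℝ ψ with hf'def
  have hf'c : ContDiff ℝ 1 f' := hψ.fderiv_right (by norm_num)
  have hf'd : Differentiable ℝ f' := hf'c.differentiable one_ne_zero
  have hw₀d : Differentiable ℝ w₀ := hw₀.differentiable one_ne_zero
  -- ψ has fderiv f'
  have hA : ∀ q : ℝ × ℝ, HasFDerivAt ψ (f' q) q := fun q => (hψd q).hasFDerivAt
  -- pointwise formulas for Pu ψ, Pv ψ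
  have hline_u : ∀ a b : ℝ, HasDerivAt (fun u : ℝ => ((u : ℝ), b)) (((1:ℝ), (0:ℝ))) a :=
    fun a b => HasDerivAt.prodMk (hasDerivAt_id a) (hasDerivAt_const a b)
  have hline_v : ∀ a b : ℝ, HasDerivAt (fun v : ℝ => (a, (v : ℝ))) (((0:ℝ), (1:ℝ))) b :=
    fun a b => HasDerivAt.prodMk (hasDerivAt_const b a) (hasDerivAt_id b)
  have hψu : ∀ a b : ℝ, HasDerivAt (fun u => ψ (u, b)) (f' (a, b) (1, 0)) a := by
    intro a b
    exact (hA (a, b)).comp_hasDerivAt a (hline_u a b)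
  have hψv : ∀ a b : ℝ, HasDerivAt (fun v => ψ (a, v)) (f' (a, b) (0, 1)) b := by
    intro a b
    exact (hA (a, b)).comp_hasDerivAt b (hline_v a b)
  have hPvψ : Pv ψ = fun q : ℝ × ℝ => f' q (0, 1) := by
    funext q
    rw [hPv]
    exact (hψv q.1 q.2).deriv
  have hPuψ : Pu ψ = fun q : ℝ × ℝ => f' q (1, 0) := by
    funext q
    rw [hPu]
    exact (hψu q.1 q.2).deriv
  intro p
  obtain ⟨a, b⟩ := p
  -- second derivative
  set f'' : (ℝ × ℝ) →L[ℝ] (ℝ × ℝ) →L[ℝ] ℝ := fderiv ℝ f' (a, b) with hf''def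
  have hB : HasFDerivAt f' f'' (a, b) := (hf'd (a, b)).hasFDerivAt
  have hsymm : f'' (1, 0) (0, 1) = f'' (0, 1) (1, 0) :=
    second_derivative_symmetric hA hB _ _
  -- derivative of u ↦ f' (u, b) applied to (0,1)
  have hmix_u : HasDerivAt (fun u => f' (u, b) (0, 1)) (f'' (1, 0) (0, 1)) a := by
    have h1 : HasDerivAt (fun u => f' (u, b)) (f'' (1, 0)) a :=
      hB.comp_hasDerivAt a (hline_u a b)
    have := h1.clm_apply (hasDerivAt_const a ((0:ℝ), (1:ℝ)))
    simpa using this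
  have hmix_v : HasDerivAt (fun v => f' (a, v) (1, 0)) (f'' (0, 1) (1, 0)) b := by
    have h1 : HasDerivAt (fun v => f' (a, v)) (f'' (0, 1)) b :=
      hB.comp_hasDerivAt b (hline_v a b)
    have := h1.clm_apply (hasDerivAt_const b ((1:ℝ), (0:ℝ)))
    simpa using this
  -- the PDE gives the value of the mixed derivative
  have hS : f'' (1, 0) (0, 1) = -(w₀ ((b - a) / 2) * ψ (a, b)) := by
    have h := heq (a, b)
    rw [hPu, hw] at h
    have hval : deriv (fun u => Pv ψ (u, (a, b).2)) (a, b).1 = f'' (1, 0) (0, 1) := by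
      simp only [hPvψ]
      exact hmix_u.deriv
    simp only [hval] at h
    linarith [h]
  -- derivative of the potential along each line
  have hwu : HasDerivAt (fun u : ℝ => w₀ ((b - u) / 2))
      (deriv w₀ ((b - a) / 2) * ((0 - 1) / 2)) a := by
    have hin : HasDerivAt (fun u : ℝ => (b - u) / 2) ((0 - 1) / 2) a :=
      ((hasDerivAt_const a b).sub (hasDerivAt_id a)).div_const 2
    exact ((hw₀d _).hasDerivAt).comp a hin
  have hwv : HasDerivAt (fun v : ℝ => w₀ ((v - a) / 2))
      (deriv w₀ ((b - a) / 2) * ((1 - 0) / 2)) b := by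
    have hin : HasDerivAt (fun v : ℝ => (v - a) / 2) ((1 - 0) / 2) b :=
      ((hasDerivAt_id b).sub (hasDerivAt_const b a)).div_const 2
    exact ((hw₀d _).hasDerivAt).comp b hin
  -- full derivative in u of the flux
  have hFu : HasDerivAt (fun u => (f' (u, b) (0, 1)) ^ 2 + w₀ ((b - u) / 2) * (ψ (u, b)) ^ 2)
      ((2 : ℕ) * (f' (a, b) (0, 1)) ^ 1 * (f'' (1, 0) (0, 1))
        + (deriv w₀ ((b - a) / 2) * ((0 - 1) / 2) * (ψ (a, b)) ^ 2
          + w₀ ((b - a) / 2) * ((2 : ℕ) * (ψ (a, b)) ^ 1 * (f' (a, b) (1, 0))))) a :=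
    (hmix_u.pow 2).add (hwu.mul ((hψu a b).pow 2))
  have hFv : HasDerivAt (fun v => (f' (a, v) (1, 0)) ^ 2 + w₀ ((v - a) / 2) * (ψ (a, v)) ^ 2)
      ((2 : ℕ) * (f' (a, b) (1, 0)) ^ 1 * (f'' (0, 1) (1, 0))
        + (deriv w₀ ((b - a) / 2) * ((1 - 0) / 2) * (ψ (a, b)) ^ 2
          + w₀ ((b - a) / 2) * ((2 : ℕ) * (ψ (a, b)) ^ 1 * (f' (a, b) (0, 1))))) b :=
    (hmix_v.pow 2).add (hwv.mul ((hψv a b).pow 2))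
  rw [hPu, hPv]
  have e1 : (fun u => (Pv ψ (u, (a, b).2)) ^ 2 + w (u, (a, b).2) * (ψ (u, (a, b).2)) ^ 2)
      = fun u => (f' (u, b) (0, 1)) ^ 2 + w₀ ((b - u) / 2) * (ψ (u, b)) ^ 2 := by
    funext u
    simp [hPvψ, hw]
  have e2 : (fun v => (Pu ψ ((a, b).1, v)) ^ 2 + w ((a, b).1, v) * (ψ ((a, b).1, v)) ^ 2)
      = fun v => (f' (a, v) (1, 0)) ^ 2 + w₀ ((v - a) / 2) * (ψ (a, v)) ^ 2 := by
    funext v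
    simp [hPuψ, hw]
  simp only [e1, e2]
  rw [hFu.deriv, hFv.deriv, hsymm.symm, hS]
  ring
end

section
/- (Energy flux identity on a characteristic rectangle, fixed-mode form of the Stokes-formula identity (3.13).) Let w₀ : ℝ → ℝ be C¹ and define w(u,v) = w₀((v − u)/2). Suppose ψ : ℝ² → ℝ is C² in the coordinates (u,v) and satisfies ∂_u∂_v ψ + w·ψ = 0 on ℝ². Set A = (∂_v ψ)² + w·ψ² and B = (∂_u ψ)² + w·ψ². Then for all u₀ ≤ u₁ and v₀ ≤ v₁, ∫_{v₀}^{v₁} A(u₁,v) dv + ∫_{u₀}^{u₁} B(u,v₁) du = ∫_{v₀}^{v₁} A(u₀,v) dv + ∫_{u₀}^{u₁} B(u,v₀) du; i.e. the energy flux entering the rectangle through the null sides {u = u₀} and {v = v₀} equals the flux leaving through {u = u₁} and {v = v₁}. -/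
open MeasureTheory intervalIntegral Set

section aux

/-- Derivative along a horizontal line of a function on the plane. -/
private lemma lineU {G : Type*} [NormedAddCommGroup G] [NormedSpace ℝ G]
    {f : ℝ × ℝ → G} {f' : (ℝ × ℝ) →L[ℝ] G} (u v : ℝ)
    (hf : HasFDerivAt f f' (u, v)) :
    HasDerivAt (fun u' => f (u', v)) (f' (1, 0)) u := by
  have h : HasDerivAt (fun u' : ℝ => ((u', v) : ℝ × ℝ)) ((1 : ℝ), (0 : ℝ)) u :=
    (hasDerivAt_id u).prodMk (hasDerivAt_const u v)
  exact hf.comp_hasDerivAt u h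

/-- Derivative along a vertical line of a function on the plane. -/
private lemma lineV {G : Type*} [NormedAddCommGroup G] [NormedSpace ℝ G]
    {f : ℝ × ℝ → G} {f' : (ℝ × ℝ) →L[ℝ] G} (u v : ℝ)
    (hf : HasFDerivAt f f' (u, v)) :
    HasDerivAt (fun v' => f (u, v')) (f' (0, 1)) v := by
  have h : HasDerivAt (fun v' : ℝ => ((u, v') : ℝ × ℝ)) ((0 : ℝ), (1 : ℝ)) v :=
    (hasDerivAt_const v u).prodMk (hasDerivAt_id v)
  exact hf.comp_hasDerivAt v h

end aux

/-- energy flux identity on a characteristic rectangle, fixed-mode form of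
(3.13): if `∂_u∂_v ψ + w ψ = 0` with `w(u,v) = w₀((v−u)/2)`, and
`A = (∂_v ψ)² + w ψ²`, `B = (∂_u ψ)² + w ψ²`, then for `u₀ ≤ u₁`, `v₀ ≤ v₁`,
`∫_{v₀}^{v₁} A(u₁,v) dv + ∫_{u₀}^{u₁} B(u,v₁) du
  = ∫_{v₀}^{v₁} A(u₀,v) dv + ∫_{u₀}^{u₁} B(u,v₀) du`. -/
theorem energy_flux_identity_rectangle (w₀ : ℝ → ℝ) (hw₀ : ContDiff ℝ 1 w₀)
    (w : ℝ × ℝ → ℝ) (hw : ∀ p : ℝ × ℝ, w p = w₀ ((p.2 - p.1) / 2))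
    (ψ : ℝ × ℝ → ℝ) (hψ : ContDiff ℝ 2 ψ)
    (Pu Pv : (ℝ × ℝ → ℝ) → (ℝ × ℝ → ℝ))
    (hPu : ∀ (f : ℝ × ℝ → ℝ) (p : ℝ × ℝ), Pu f p = deriv (fun u => f (u, p.2)) p.1)
    (hPv : ∀ (f : ℝ × ℝ → ℝ) (p : ℝ × ℝ), Pv f p = deriv (fun v => f (p.1, v)) p.2)
    (heq : ∀ p : ℝ × ℝ, Pu (Pv ψ) p + w p * ψ p = 0)
    (A B : ℝ × ℝ → ℝ)
    (hA : ∀ p : ℝ × ℝ, A p = (Pv ψ p) ^ 2 + w p * (ψ p) ^ 2)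
    (hB : ∀ p : ℝ × ℝ, B p = (Pu ψ p) ^ 2 + w p * (ψ p) ^ 2) :
    ∀ u₀ u₁ v₀ v₁ : ℝ, u₀ ≤ u₁ → v₀ ≤ v₁ →
      (∫ v in v₀..v₁, A (u₁, v)) + (∫ u in u₀..u₁, B (u, v₁))
        = (∫ v in v₀..v₁, A (u₀, v)) + (∫ u in u₀..u₁, B (u, v₀)) := by
  intro u₀ u₁ v₀ v₁ hu hv
  -- smoothness bookkeeping
  have hψ1 : ContDiff ℝ 1 ψ := hψ.of_le one_le_two
  have hF : ContDiff ℝ 1 (fderiv ℝ ψ) := hψ.fderiv_right (le_refl 2)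
  set F : ℝ × ℝ → (ℝ × ℝ) →L[ℝ] ℝ := fderiv ℝ ψ with hFdef
  set S : ℝ × ℝ → (ℝ × ℝ) →L[ℝ] (ℝ × ℝ) →L[ℝ] ℝ := fderiv ℝ F with hSdef
  have hFd : Differentiable ℝ F := hF.differentiable one_ne_zero
  have hψd : Differentiable ℝ ψ := hψ1.differentiable one_ne_zero
  have hFc : Continuous F := hF.continuous
  have hSc : Continuous S := hF.continuous_fderiv one_ne_zero
  have hψc : Continuous ψ := hψ.continuous
  set ψu : ℝ × ℝ → ℝ := fun p => F p (1, 0) with hψudef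
  set ψv : ℝ × ℝ → ℝ := fun p => F p (0, 1) with hψvdef
  have hψuc : Continuous ψu := hFc.clm_apply continuous_const
  have hψvc : Continuous ψv := hFc.clm_apply continuous_const
  -- derivatives of ψ along lines
  have hψU : ∀ u v : ℝ, HasDerivAt (fun u' => ψ (u', v)) (ψu (u, v)) u :=
    fun u v => lineU u v (hψd (u, v)).hasFDerivAt
  have hψV : ∀ u v : ℝ, HasDerivAt (fun v' => ψ (u, v')) (ψv (u, v)) v :=
    fun u v => lineV u v (hψd (u, v)).hasFDerivAt
  -- derivatives of ψu, ψv along lines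
  have hFDu : ∀ p : ℝ × ℝ, HasFDerivAt ψu
      ((ContinuousLinearMap.apply ℝ ℝ ((1 : ℝ), (0 : ℝ))).comp (S p)) p :=
    fun p => (ContinuousLinearMap.apply ℝ ℝ ((1 : ℝ), (0 : ℝ))).hasFDerivAt.comp p
      (hFd p).hasFDerivAt
  have hFDv : ∀ p : ℝ × ℝ, HasFDerivAt ψv
      ((ContinuousLinearMap.apply ℝ ℝ ((0 : ℝ), (1 : ℝ))).comp (S p)) p :=
    fun p => (ContinuousLinearMap.apply ℝ ℝ ((0 : ℝ), (1 : ℝ))).hasFDerivAt.comp p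
      (hFd p).hasFDerivAt
  have hψvU : ∀ u v : ℝ, HasDerivAt (fun u' => ψv (u', v)) (S (u, v) (1, 0) (0, 1)) u :=
    fun u v => lineU u v (hFDv (u, v))
  have hψuV : ∀ u v : ℝ, HasDerivAt (fun v' => ψu (u, v')) (S (u, v) (0, 1) (1, 0)) v :=
    fun u v => lineV u v (hFDu (u, v))
  -- Pu ψ and Pv ψ computed
  have hPuψ : ∀ p : ℝ × ℝ, Pu ψ p = ψu p := fun p => by
    rw [hPu]; exact (hψU p.1 p.2).deriv
  have hPvψ : ∀ p : ℝ × ℝ, Pv ψ p = ψv p := fun p => by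
    rw [hPv]; exact (hψV p.1 p.2).deriv
  -- the mixed second derivative
  have hmix : ∀ p : ℝ × ℝ, S p (1, 0) (0, 1) = -(w p * ψ p) := by
    intro p
    have h2 : Pu (Pv ψ) p = S p (1, 0) (0, 1) := by
      rw [hPu]
      have he : (fun u => Pv ψ (u, p.2)) = fun u => ψv (u, p.2) :=
        funext fun u => hPvψ (u, p.2)
      rw [he]
      exact (hψvU p.1 p.2).deriv
    have h3 := heq p
    rw [h2] at h3
    linarith
  have hsym : ∀ p : ℝ × ℝ, S p (0, 1) (1, 0) = S p (1, 0) (0, 1) := by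
    intro p
    have := (hψ.contDiffAt (x := p)).isSymmSndFDerivAt (by simp)
    exact this (0, 1) (1, 0)
  -- derivatives of w along lines
  have hw₀d : Differentiable ℝ w₀ := hw₀.differentiable one_ne_zero
  have hw₀'c : Continuous (deriv w₀) := hw₀.continuous_deriv le_rfl
  have hwc : Continuous w := by
    have : w = fun p : ℝ × ℝ => w₀ ((p.2 - p.1) / 2) := funext hw
    rw [this]
    exact hw₀.continuous.comp ((continuous_snd.sub continuous_fst).div_const 2)
  have hwU : ∀ u v : ℝ,
      HasDerivAt (fun u' => w (u', v)) (-(deriv w₀ ((v - u) / 2)) / 2) u := by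
    intro u v
    have h1 : HasDerivAt (fun u' : ℝ => (v - u') / 2) (-1 / 2 : ℝ) u := by
      simpa using ((hasDerivAt_const u v).sub (hasDerivAt_id u)).div_const 2
    have h2 := (hw₀d ((v - u) / 2)).hasDerivAt.comp u h1
    have h3 : (fun u' => w (u', v)) = fun u' => w₀ ((v - u') / 2) :=
      funext fun u' => hw (u', v)
    rw [h3]
    exact h2.congr_deriv (by ring)
  have hwV : ∀ u v : ℝ,
      HasDerivAt (fun v' => w (u, v')) (deriv w₀ ((v - u) / 2) / 2) v := by
    intro u v
    have h1 : HasDerivAt (fun v' : ℝ => (v' - u) / 2) (1 / 2 : ℝ) v := by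
      simpa using ((hasDerivAt_id v).sub (hasDerivAt_const v u)).div_const 2
    have h2 := (hw₀d ((v - u) / 2)).hasDerivAt.comp v h1
    have h3 : (fun v' => w (u, v')) = fun v' => w₀ ((v' - u) / 2) :=
      funext fun v' => hw (u, v')
    rw [h3]
    exact h2.congr_deriv (by ring)
  -- the u-derivative of A and v-derivative of B
  set g : ℝ × ℝ → ℝ := fun p =>
    2 * ψv p ^ 1 * S p (1, 0) (0, 1) +
      (-(deriv w₀ ((p.2 - p.1) / 2)) / 2 * ψ p ^ 2 + w p * (2 * ψ p ^ 1 * ψu p))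
    with hgdef
  set h : ℝ × ℝ → ℝ := fun p =>
    2 * ψu p ^ 1 * S p (0, 1) (1, 0) +
      (deriv w₀ ((p.2 - p.1) / 2) / 2 * ψ p ^ 2 + w p * (2 * ψ p ^ 1 * ψv p))
    with hhdef
  have hAfun : A = fun p => ψv p ^ 2 + w p * ψ p ^ 2 :=
    funext fun p => by rw [hA, hPvψ]
  have hBfun : B = fun p => ψu p ^ 2 + w p * ψ p ^ 2 :=
    funext fun p => by rw [hB, hPuψ]
  have hAc : Continuous A := by
    rw [hAfun]; exact (hψvc.pow 2).add (hwc.mul (hψc.pow 2))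
  have hBc : Continuous B := by
    rw [hBfun]; exact (hψuc.pow 2).add (hwc.mul (hψc.pow 2))
  have hAU : ∀ u v : ℝ, HasDerivAt (fun u' => A (u', v)) (g (u, v)) u := by
    intro u v
    have h3 : (fun u' => A (u', v)) = fun u' => ψv (u', v) ^ 2 + w (u', v) * ψ (u', v) ^ 2 := by
      rw [hAfun]
    rw [h3]
    exact ((hψvU u v).pow 2).add ((hwU u v).mul ((hψU u v).pow 2))
  have hBV : ∀ u v : ℝ, HasDerivAt (fun v' => B (u, v')) (h (u, v)) v := by
    intro u v
    have h3 : (fun v' => B (u, v')) = fun v' => ψu (u, v') ^ 2 + w (u, v') * ψ (u, v') ^ 2 := by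
      rw [hBfun]
    rw [h3]
    exact ((hψuV u v).pow 2).add ((hwV u v).mul ((hψV u v).pow 2))
  have hgh : ∀ p : ℝ × ℝ, h p = -g p := by
    intro p
    rw [hhdef, hgdef]
    simp only
    rw [hsym p, hmix p]
    ring
  -- continuity of g
  have hgc : Continuous g := by
    rw [hgdef]
    have hScc : Continuous fun p : ℝ × ℝ => S p (1, 0) (0, 1) :=
      (hSc.clm_apply continuous_const).clm_apply continuous_const
    have hw' : Continuous fun p : ℝ × ℝ => deriv w₀ ((p.2 - p.1) / 2) :=
      hw₀'c.comp ((continuous_snd.sub continuous_fst).div_const 2)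
    exact ((continuous_const.mul (hψvc.pow 1)).mul hScc).add
      (((hw'.neg.div_const 2).mul (hψc.pow 2)).add
        (hwc.mul ((continuous_const.mul (hψc.pow 1)).mul hψuc)))
  -- fundamental theorem of calculus on each line
  have hIA : ∀ v : ℝ, (∫ u in u₀..u₁, g (u, v)) = A (u₁, v) - A (u₀, v) := by
    intro v
    exact integral_eq_sub_of_hasDerivAt (fun u _ => hAU u v)
      ((hgc.comp (continuous_id.prodMk continuous_const)).intervalIntegrable u₀ u₁)
  have hIB : ∀ u : ℝ, (∫ v in v₀..v₁, h (u, v)) = B (u, v₁) - B (u, v₀) := by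
    intro u
    exact integral_eq_sub_of_hasDerivAt (fun v _ => hBV u v)
      (((hgc.comp (continuous_const.prodMk continuous_id)).neg.congr
        (fun v => (hgh (u, v)).symm)).intervalIntegrable v₀ v₁)
  -- Fubini for g on the rectangle
  have hswap : (∫ v in v₀..v₁, ∫ u in u₀..u₁, g (u, v)) =
      ∫ u in u₀..u₁, ∫ v in v₀..v₁, g (u, v) := by
    simp_rw [intervalIntegral.integral_of_le hu, intervalIntegral.integral_of_le hv]
    have hint : Integrable (Function.uncurry fun v u => g (u, v))
        ((volume.restrict (Ioc v₀ v₁)).prod (volume.restrict (Ioc u₀ u₁))) := by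
      rw [Measure.prod_restrict]
      have h1 : IntegrableOn (fun q : ℝ × ℝ => g q.swap) (Icc v₀ v₁ ×ˢ Icc u₀ u₁)
          (volume.prod volume) := by
        rw [← Measure.volume_eq_prod]
        exact ((hgc.comp continuous_swap).continuousOn).integrableOn_compact
          (isCompact_Icc.prod isCompact_Icc)
      exact h1.mono_set (Set.prod_mono Ioc_subset_Icc_self Ioc_subset_Icc_self)
    exact MeasureTheory.integral_integral_swap hint
  -- assemble
  have hAint : ∀ u : ℝ, IntervalIntegrable (fun v => A (u, v)) volume v₀ v₁ :=
    fun u => (hAc.comp (continuous_const.prodMk continuous_id)).intervalIntegrable v₀ v₁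
  have hBint : ∀ v : ℝ, IntervalIntegrable (fun u => B (u, v)) volume u₀ u₁ :=
    fun v => (hBc.comp (continuous_id.prodMk continuous_const)).intervalIntegrable u₀ u₁
  have e1 : (∫ v in v₀..v₁, A (u₁, v)) - (∫ v in v₀..v₁, A (u₀, v)) =
      ∫ v in v₀..v₁, ∫ u in u₀..u₁, g (u, v) := by
    rw [← intervalIntegral.integral_sub (hAint u₁) (hAint u₀)]
    exact intervalIntegral.integral_congr fun v _ => (hIA v).symm
  have e2 : (∫ u in u₀..u₁, B (u, v₁)) - (∫ u in u₀..u₁, B (u, v₀)) =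
      -∫ u in u₀..u₁, ∫ v in v₀..v₁, g (u, v) := by
    rw [← intervalIntegral.integral_sub (hBint v₁) (hBint v₀)]
    rw [← intervalIntegral.integral_neg]
    refine intervalIntegral.integral_congr fun u _ => ?_
    rw [← hIB u]
    rw [← intervalIntegral.integral_neg]
    exact intervalIntegral.integral_congr fun v _ => (hgh (u, v)) ▸ rfl
  rw [hswap] at e1
  linarith
end
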